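/- arXiv:1201.2834 — 2 statements merged into one kernel-verified Lean document; each statement's English description precedes it below -/
import Mathlib

section
/- For all k ≥ 0, if u_{k−1}(s) > 0 for all states s ∈ S ∖ W₂, then for every player-2 strategy σ₂ and every state s, Pr_s^{η̄_k,σ₂}(Reach(T ∪ W₂)) = 1; that is, the memoryless strategy induced by the selector η_k is proper. -/
open scoped Classical

/-- A (two-player) concurrent game structure: a finite state space `S`, a finite
set `M` of moves, move assignments `Γ₁ Γ₂ : S → Finset M`, and a probabilistic
transition function `δ`. -/
structure CGame (S : Type) (M : Type) where
  Γ₁ : S → Finset M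
  Γ₂ : S → Finset M
  δ : S → M → M → S → ℝ

namespace CGame

variable {S M : Type} [Fintype S] [DecidableEq S] [Fintype M] [DecidableEq M]

/-- Well-formedness of a concurrent game structure: move sets are nonempty and
`δ s a b` is a probability distribution over states. -/
def IsGame (G : CGame S M) : Prop :=
  (∀ s, (G.Γ₁ s).Nonempty) ∧ (∀ s, (G.Γ₂ s).Nonempty) ∧
    (∀ s a b t, 0 ≤ G.δ s a b t) ∧ (∀ s a b, (∑ t, G.δ s a b t) = 1)

/-- `x : M → ℝ` is a probability distribution supported on `A`. -/
def IsDistOn (A : Finset M) (x : M → ℝ) : Prop :=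
  (∀ a, 0 ≤ x a) ∧ (∀ a, x a ≠ 0 → a ∈ A) ∧ (∑ a, x a) = 1

/-- A selector for player 1. -/
def IsSel1 (G : CGame S M) (ξ : S → M → ℝ) : Prop := ∀ s, IsDistOn (G.Γ₁ s) (ξ s)

/-- A selector for player 2. -/
def IsSel2 (G : CGame S M) (ξ : S → M → ℝ) : Prop := ∀ s, IsDistOn (G.Γ₂ s) (ξ s)

/-- A strategy for player 1: maps a history (past states `w` and current state `s`)
to a distribution over the moves available at `s`. -/
def IsStrat1 (G : CGame S M) (σ : List S → S → M → ℝ) : Prop :=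
  ∀ w s, IsDistOn (G.Γ₁ s) (σ w s)

/-- A strategy for player 2. -/
def IsStrat2 (G : CGame S M) (σ : List S → S → M → ℝ) : Prop :=
  ∀ w s, IsDistOn (G.Γ₂ s) (σ w s)

/-- The memoryless strategy induced by a selector. -/
def ml (ξ : S → M → ℝ) : List S → S → M → ℝ := fun _ s => ξ s

/-- The pure (Dirac) distribution on a move `b`. -/
def pureDist (b : M) : M → ℝ := fun b' => if b' = b then 1 else 0

/-- The player-1 selector choosing all available moves uniformly at random. -/
noncomputable def uniformSel (G : CGame S M) : S → M → ℝ :=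
  fun s a => if a ∈ G.Γ₁ s then (1 : ℝ) / (G.Γ₁ s).card else 0

/-- Probability of reaching `T` within `n` steps, starting from history `w`
and current state `s`, under strategies `σ₁, σ₂`. -/
noncomputable def reachW (G : CGame S M) (σ₁ σ₂ : List S → S → M → ℝ) (T : Set S) :
    ℕ → List S → S → ℝ
  | 0, _, s => if s ∈ T then 1 else 0
  | n + 1, w, s =>
      if s ∈ T then 1
      else ∑ a : M, ∑ b : M, ∑ t : S,
        σ₁ w s a * σ₂ w s b * G.δ s a b t * reachW G σ₁ σ₂ T n (w ++ [s]) t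

/-- Probability of staying in `F` for `n` steps, starting from history `w`
and current state `s`, under strategies `σ₁, σ₂`. -/
noncomputable def safeW (G : CGame S M) (σ₁ σ₂ : List S → S → M → ℝ) (F : Set S) :
    ℕ → List S → S → ℝ
  | 0, _, s => if s ∈ F then 1 else 0
  | n + 1, w, s =>
      if s ∈ F then
        ∑ a : M, ∑ b : M, ∑ t : S,
          σ₁ w s a * σ₂ w s b * G.δ s a b t * safeW G σ₁ σ₂ F n (w ++ [s]) t
      else 0

/-- `Pr_s^{σ₁,σ₂}(Reach T)`: probability of eventually reaching `T` from `s`. -/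
noncomputable def prReach (G : CGame S M) (σ₁ σ₂ : List S → S → M → ℝ) (T : Set S)
    (s : S) : ℝ :=
  ⨆ n : ℕ, reachW G σ₁ σ₂ T n [] s

/-- `Pr_s^{σ₁,σ₂}(Safe F)`: probability that the play stays in `F` forever. -/
noncomputable def prSafe (G : CGame S M) (σ₁ σ₂ : List S → S → M → ℝ) (F : Set S)
    (s : S) : ℝ :=
  ⨅ n : ℕ, safeW G σ₁ σ₂ F n [] s

/-- `⟨1⟩val^{σ₁}(Reach T)(s) = inf_{σ₂} Pr_s^{σ₁,σ₂}(Reach T)`. -/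
noncomputable def valReachUnder (G : CGame S M) (σ₁ : List S → S → M → ℝ) (T : Set S)
    (s : S) : ℝ :=
  ⨅ σ₂ : {σ // IsStrat2 G σ}, prReach G σ₁ σ₂.1 T s

/-- `⟨1⟩val(Reach T)(s) = sup_{σ₁} inf_{σ₂} Pr_s^{σ₁,σ₂}(Reach T)`. -/
noncomputable def valReach (G : CGame S M) (T : Set S) (s : S) : ℝ :=
  ⨆ σ₁ : {σ // IsStrat1 G σ}, valReachUnder G σ₁.1 T s

/-- `⟨1⟩val^{σ₁}(Safe F)(s) = inf_{σ₂} Pr_s^{σ₁,σ₂}(Safe F)`. -/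
noncomputable def valSafeUnder (G : CGame S M) (σ₁ : List S → S → M → ℝ) (F : Set S)
    (s : S) : ℝ :=
  ⨅ σ₂ : {σ // IsStrat2 G σ}, prSafe G σ₁ σ₂.1 F s

/-- `⟨1⟩val(Safe F)(s) = sup_{σ₁} inf_{σ₂} Pr_s^{σ₁,σ₂}(Safe F)`. -/
noncomputable def valSafe (G : CGame S M) (F : Set S) (s : S) : ℝ :=
  ⨆ σ₁ : {σ // IsStrat1 G σ}, valSafeUnder G σ₁.1 F s

/-- `W₂ = {s | ⟨1⟩val(Reach T)(s) = 0}`. -/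
noncomputable def W2 (G : CGame S M) (T : Set S) : Set S := {s | valReach G T s = 0}

/-- `W₁ = {s | ⟨1⟩val(Safe F)(s) = 1}`. -/
noncomputable def W1 (G : CGame S M) (F : Set S) : Set S := {s | valSafe G F s = 1}

/-- A state is absorbing if for all moves the successor is the state itself. -/
def Absorbing (G : CGame S M) (s : S) : Prop := ∀ a b, G.δ s a b s = 1

/-- A player-1 strategy is proper if against every player-2 strategy, from every
state the set `T ∪ W₂` is reached with probability 1. -/
noncomputable def Proper (G : CGame S M) (T : Set S) (σ₁ : List S → S → M → ℝ) : Prop :=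
  ∀ σ₂, IsStrat2 G σ₂ → ∀ s, prReach G σ₁ σ₂ (T ∪ W2 G T) s = 1

/-- `Pre_{ξ₁,ξ₂}(v)(s)`: one-step expectation of `v` at `s` when the players use the
one-state selectors `x, y`. -/
noncomputable def preSS (G : CGame S M) (v : S → ℝ) (s : S) (x y : M → ℝ) : ℝ :=
  ∑ a : M, ∑ b : M, ∑ t : S, v t * G.δ s a b t * x a * y b

/-- `Pre_{1:ξ₁}(v)(s) = inf_{ξ₂} Pre_{ξ₁,ξ₂}(v)(s)`. -/
noncomputable def pre1Sel (G : CGame S M) (v : S → ℝ) (s : S) (x : M → ℝ) : ℝ :=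
  ⨅ y : {y : M → ℝ // IsDistOn (G.Γ₂ s) y}, preSS G v s x y.1

/-- `Pre₁(v)(s) = sup_{ξ₁} inf_{ξ₂} Pre_{ξ₁,ξ₂}(v)(s)`. -/
noncomputable def pre1 (G : CGame S M) (v : S → ℝ) (s : S) : ℝ :=
  ⨆ x : {x : M → ℝ // IsDistOn (G.Γ₁ s) x}, pre1Sel G v s x.1

/-- The value-iteration sequence: `u 0 = [T]`, `u (k+1) = Pre₁ (u k)`. -/
noncomputable def valIter (G : CGame S M) (T : Set S) : ℕ → S → ℝ
  | 0 => fun s => if s ∈ T then 1 else 0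
  | n + 1 => fun s => pre1 G (valIter G T n) s

/-- The entry time `ℓ_k(s) = min {j ≤ k | u_j(s) = u_k(s)}`. -/
noncomputable def entryTime (G : CGame S M) (T : Set S) (k : ℕ) (s : S) : ℕ :=
  sInf {j : ℕ | valIter G T j s = valIter G T k s}

/-- `dest(s,b)` under a player-1 selector `η`: possible successors of `s` when
player 1 plays `η` and player 2 plays `b`. -/
def destSet (G : CGame S M) (η : S → M → ℝ) (s : S) (b : M) : Set S :=
  {t | ∃ a, η s a ≠ 0 ∧ G.δ s a b t ≠ 0}

/-- `OptSel(v,s)`: the set of optimal one-state player-1 selectors for `v` at `s`. -/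
noncomputable def OptSel (G : CGame S M) (v : S → ℝ) (s : S) : Set (M → ℝ) :=
  {x | IsDistOn (G.Γ₁ s) x ∧ pre1Sel G v s x = pre1 G v s}

/-- `CountOpt(v,s,x)`: the set of counter-optimal player-2 moves against `x`. -/
noncomputable def countOpt (G : CGame S M) (v : S → ℝ) (s : S) (x : M → ℝ) : Finset M :=
  (G.Γ₂ s).filter fun b => preSS G v s x (pureDist b) = pre1 G v s

/-- The support of a one-state selector, as a `Finset`. -/
noncomputable def fsupp (x : M → ℝ) : Finset M := Finset.univ.filter fun a => x a ≠ 0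

/-- `OptSelCount(v,s)`: pairs `(A,B)` such that some optimal selector has support `A`
and counter-optimal action set `B`. -/
noncomputable def optSelCount (G : CGame S M) (v : S → ℝ) (s : S) :
    Set (Finset M × Finset M) :=
  {p | ∃ x ∈ OptSel G v s, fsupp x = p.1 ∧ countOpt G v s x = p.2}

/-- A selector is `k`-uniform if every probability it assigns is of the form `i/j`
with `0 ≤ i ≤ j ≤ k`. -/
def KUniform (k : ℕ) (ξ : S → M → ℝ) : Prop :=
  ∀ s a, ∃ i j : ℕ, i ≤ j ∧ j ≤ k ∧ ξ s a = (i : ℝ) / (j : ℝ)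

end CGame

namespace CGame

variable {S M : Type} [Fintype S] [DecidableEq S] [Fintype M] [DecidableEq M]

lemma IsDistOn.le_one {A : Finset M} {x : M → ℝ} (h : IsDistOn A x) (a : M) : x a ≤ 1 := by
  calc x a ≤ ∑ a', x a' := Finset.single_le_sum (fun i _ => h.1 i) (Finset.mem_univ a)
    _ = 1 := h.2.2

lemma isDistOn_pureDist {A : Finset M} {b : M} (hb : b ∈ A) : IsDistOn A (pureDist b) := by
  refine ⟨fun a => ?_, fun a ha => ?_, ?_⟩
  · unfold pureDist; split <;> norm_num
  · by_cases hab : a = b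
    · subst hab; exact hb
    · exfalso; apply ha; simp [pureDist, hab]
  · simp [pureDist]

lemma nonempty_dist {A : Finset M} (hA : A.Nonempty) : Nonempty {y : M → ℝ // IsDistOn A y} :=
  ⟨⟨pureDist hA.choose, isDistOn_pureDist hA.choose_spec⟩⟩

lemma delta_le_one (G : CGame S M) (hG : G.IsGame) (s : S) (a b : M) (t : S) :
    G.δ s a b t ≤ 1 := by
  calc G.δ s a b t ≤ ∑ t', G.δ s a b t' :=
        Finset.single_le_sum (fun i _ => hG.2.2.1 s a b i) (Finset.mem_univ t)
    _ = 1 := hG.2.2.2 s a b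

lemma preSS_nonneg (G : CGame S M) (hG : G.IsGame) {v : S → ℝ} (hv : ∀ t, 0 ≤ v t)
    (s : S) {x y : M → ℝ} (hx : ∀ a, 0 ≤ x a) (hy : ∀ b, 0 ≤ y b) :
    0 ≤ preSS G v s x y := by
  refine Finset.sum_nonneg fun a _ => Finset.sum_nonneg fun b _ => Finset.sum_nonneg fun t _ => ?_
  exact mul_nonneg (mul_nonneg (mul_nonneg (hv t) (hG.2.2.1 s a b t)) (hx a)) (hy b)

lemma sum_dxy (G : CGame S M) (hG : G.IsGame) (s : S) {x y : M → ℝ}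
    (hx : (∑ a, x a) = 1) (hy : (∑ b, y b) = 1) :
    (∑ a, ∑ b, ∑ t, G.δ s a b t * x a * y b) = 1 := by
  have h1 : ∀ a b, (∑ t, G.δ s a b t * x a * y b) = x a * y b := by
    intro a b
    rw [← Finset.sum_mul, ← Finset.sum_mul, hG.2.2.2 s a b, one_mul]
  have h2 : ∀ a, (∑ b, x a * y b) = x a := by
    intro a; rw [← Finset.mul_sum, hy, mul_one]
  simp only [h1, h2, hx]

lemma preSS_le_one (G : CGame S M) (hG : G.IsGame) {v : S → ℝ} (hv : ∀ t, v t ≤ 1)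
    (s : S) {x y : M → ℝ} (hx : ∀ a, 0 ≤ x a) (hy : ∀ b, 0 ≤ y b)
    (hx1 : (∑ a, x a) = 1) (hy1 : (∑ b, y b) = 1) :
    preSS G v s x y ≤ 1 := by
  have h : preSS G v s x y ≤ ∑ a, ∑ b, ∑ t, G.δ s a b t * x a * y b := by
    refine Finset.sum_le_sum fun a _ => Finset.sum_le_sum fun b _ => Finset.sum_le_sum fun t _ => ?_
    have hd := hG.2.2.1 s a b t
    have h1 : v t * G.δ s a b t ≤ G.δ s a b t := mul_le_of_le_one_left hd (hv t)
    exact mul_le_mul_of_nonneg_right (mul_le_mul_of_nonneg_right h1 (hx a)) (hy b)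
  exact h.trans (le_of_eq (sum_dxy G hG s hx1 hy1))

lemma preSS_mono (G : CGame S M) (hG : G.IsGame) {v w : S → ℝ} (hvw : ∀ t, v t ≤ w t)
    (s : S) {x y : M → ℝ} (hx : ∀ a, 0 ≤ x a) (hy : ∀ b, 0 ≤ y b) :
    preSS G v s x y ≤ preSS G w s x y := by
  refine Finset.sum_le_sum fun a _ => Finset.sum_le_sum fun b _ => Finset.sum_le_sum fun t _ => ?_
  exact mul_le_mul_of_nonneg_right (mul_le_mul_of_nonneg_right
    (mul_le_mul_of_nonneg_right (hvw t) (hG.2.2.1 s a b t)) (hx a)) (hy b)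

lemma pre1Sel_bddBelow (G : CGame S M) (hG : G.IsGame) {v : S → ℝ} (hv : ∀ t, 0 ≤ v t)
    (s : S) {x : M → ℝ} (hx : ∀ a, 0 ≤ x a) :
    BddBelow (Set.range fun y : {y : M → ℝ // IsDistOn (G.Γ₂ s) y} => preSS G v s x y.1) := by
  refine ⟨0, ?_⟩; rintro _ ⟨y, rfl⟩; exact preSS_nonneg G hG hv s hx y.2.1

lemma pre1Sel_nonneg (G : CGame S M) (hG : G.IsGame) {v : S → ℝ} (hv : ∀ t, 0 ≤ v t)
    (s : S) {x : M → ℝ} (hx : ∀ a, 0 ≤ x a) : 0 ≤ pre1Sel G v s x := by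
  haveI := nonempty_dist (hG.2.1 s)
  exact le_ciInf fun y => preSS_nonneg G hG hv s hx y.2.1

lemma pre1Sel_le_preSS (G : CGame S M) (hG : G.IsGame) {v : S → ℝ} (hv : ∀ t, 0 ≤ v t)
    (s : S) {x : M → ℝ} (hx : ∀ a, 0 ≤ x a) {y : M → ℝ} (hy : IsDistOn (G.Γ₂ s) y) :
    pre1Sel G v s x ≤ preSS G v s x y :=
  ciInf_le (pre1Sel_bddBelow G hG hv s hx) ⟨y, hy⟩

lemma pre1Sel_le_one (G : CGame S M) (hG : G.IsGame) {v : S → ℝ}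
    (hv0 : ∀ t, 0 ≤ v t) (hv1 : ∀ t, v t ≤ 1)
    (s : S) {x : M → ℝ} (hx : IsDistOn (G.Γ₁ s) x) : pre1Sel G v s x ≤ 1 := by
  obtain ⟨b, hb⟩ := hG.2.1 s
  refine le_trans (pre1Sel_le_preSS G hG hv0 s hx.1 (isDistOn_pureDist hb)) ?_
  exact preSS_le_one G hG hv1 s hx.1 (isDistOn_pureDist hb).1 hx.2.2 (isDistOn_pureDist hb).2.2

lemma pre1_bddAbove (G : CGame S M) (hG : G.IsGame) {v : S → ℝ}
    (hv0 : ∀ t, 0 ≤ v t) (hv1 : ∀ t, v t ≤ 1) (s : S) :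
    BddAbove (Set.range fun x : {x : M → ℝ // IsDistOn (G.Γ₁ s) x} => pre1Sel G v s x.1) :=
  ⟨1, by rintro _ ⟨x, rfl⟩; exact pre1Sel_le_one G hG hv0 hv1 s x.2⟩

lemma pre1_nonneg (G : CGame S M) (hG : G.IsGame) {v : S → ℝ}
    (hv0 : ∀ t, 0 ≤ v t) (hv1 : ∀ t, v t ≤ 1) (s : S) : 0 ≤ pre1 G v s := by
  obtain ⟨x₀⟩ := nonempty_dist (hG.1 s)
  exact le_ciSup_of_le (pre1_bddAbove G hG hv0 hv1 s) x₀ (pre1Sel_nonneg G hG hv0 s x₀.2.1)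

lemma pre1_le_one (G : CGame S M) (hG : G.IsGame) {v : S → ℝ}
    (hv0 : ∀ t, 0 ≤ v t) (hv1 : ∀ t, v t ≤ 1) (s : S) : pre1 G v s ≤ 1 := by
  haveI := nonempty_dist (hG.1 s)
  exact ciSup_le fun x => pre1Sel_le_one G hG hv0 hv1 s x.2

lemma pre1_mono (G : CGame S M) (hG : G.IsGame) {v w : S → ℝ}
    (hv0 : ∀ t, 0 ≤ v t) (hw0 : ∀ t, 0 ≤ w t) (hw1 : ∀ t, w t ≤ 1)
    (hvw : ∀ t, v t ≤ w t) (s : S) : pre1 G v s ≤ pre1 G w s := by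
  haveI := nonempty_dist (hG.1 s)
  haveI := nonempty_dist (hG.2.1 s)
  refine ciSup_mono (pre1_bddAbove G hG hw0 hw1 s) fun x => ?_
  refine ciInf_mono (pre1Sel_bddBelow G hG hv0 s x.2.1) fun y => ?_
  exact preSS_mono G hG hvw s x.2.1 y.2.1

lemma valIter_mem01 (G : CGame S M) (hG : G.IsGame) (T : Set S) :
    ∀ n s, 0 ≤ valIter G T n s ∧ valIter G T n s ≤ 1 := by
  intro n
  induction n with
  | zero => intro s; constructor <;> (simp only [valIter]; split <;> norm_num)
  | succ n ih =>
      intro s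
      have h0 : ∀ t, 0 ≤ valIter G T n t := fun t => (ih t).1
      have h1 : ∀ t, valIter G T n t ≤ 1 := fun t => (ih t).2
      exact ⟨pre1_nonneg G hG h0 h1 s, pre1_le_one G hG h0 h1 s⟩

lemma preSS_absorbing (G : CGame S M) (hG : G.IsGame) {v : S → ℝ} (s : S)
    (ha : Absorbing G s) {x y : M → ℝ} (hx1 : (∑ a, x a) = 1) (hy1 : (∑ b, y b) = 1) :
    preSS G v s x y = v s := by
  have hδ0 : ∀ a b t, t ≠ s → G.δ s a b t = 0 := by
    intro a b t ht
    have hsum := hG.2.2.2 s a b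
    have herase := Finset.add_sum_erase Finset.univ (G.δ s a b) (Finset.mem_univ s)
    rw [hsum] at herase
    have h0 : ∑ t' ∈ Finset.univ.erase s, G.δ s a b t' = 0 := by
      have := ha a b; linarith
    exact (Finset.sum_eq_zero_iff_of_nonneg (fun t' _ => hG.2.2.1 s a b t')).1 h0 t
      (Finset.mem_erase.2 ⟨ht, Finset.mem_univ t⟩)
  have hinner : ∀ a b, (∑ t, v t * G.δ s a b t * x a * y b) = v s * x a * y b := by
    intro a b
    rw [Finset.sum_eq_single s]
    · rw [ha a b]; ring
    · intro t _ ht; rw [hδ0 a b t ht]; ring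
    · intro h; exact absurd (Finset.mem_univ s) h
  unfold preSS
  simp only [hinner]
  have h2 : ∀ a, (∑ b, v s * x a * y b) = v s * x a := by
    intro a; rw [← Finset.mul_sum, hy1, mul_one]
  simp only [h2]
  rw [← Finset.mul_sum, hx1, mul_one]

lemma pre1_absorbing (G : CGame S M) (hG : G.IsGame) {v : S → ℝ} (s : S)
    (ha : Absorbing G s) : pre1 G v s = v s := by
  have hsel : ∀ x : M → ℝ, IsDistOn (G.Γ₁ s) x → pre1Sel G v s x = v s := by
    intro x hx
    haveI hne := nonempty_dist (hG.2.1 s)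
    obtain ⟨y₀⟩ := nonempty_dist (hG.2.1 s)
    have hall : ∀ y : {y : M → ℝ // IsDistOn (G.Γ₂ s) y}, preSS G v s x y.1 = v s :=
      fun y => preSS_absorbing G hG s ha hx.2.2 y.2.2.2
    refine le_antisymm ?_ (le_ciInf fun y => (hall y).ge)
    exact ciInf_le_of_le ⟨v s, by rintro _ ⟨y, rfl⟩; exact (hall y).ge⟩ y₀ (hall y₀).le
  haveI hne1 := nonempty_dist (hG.1 s)
  obtain ⟨x₀⟩ := nonempty_dist (hG.1 s)
  refine le_antisymm (ciSup_le fun x => (hsel x.1 x.2).le) ?_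
  exact le_ciSup_of_le ⟨v s, by rintro _ ⟨x, rfl⟩; exact (hsel x.1 x.2).le⟩ x₀ (hsel x₀.1 x₀.2).ge

lemma valIter_mem_T (G : CGame S M) (hG : G.IsGame) (T : Set S)
    (habs : ∀ s ∈ T ∪ W2 G T, Absorbing G s) {s : S} (hs : s ∈ T) :
    ∀ n, valIter G T n s = 1 := by
  intro n; induction n with
  | zero => simp [valIter, hs]
  | succ n ih =>
      have : valIter G T (n+1) s = pre1 G (valIter G T n) s := rfl
      rw [this, pre1_absorbing G hG s (habs s (Set.mem_union_left _ hs)), ih]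

lemma valIter_le_succ (G : CGame S M) (hG : G.IsGame) (T : Set S)
    (habs : ∀ s ∈ T ∪ W2 G T, Absorbing G s) :
    ∀ n s, valIter G T n s ≤ valIter G T (n+1) s := by
  intro n
  induction n with
  | zero =>
      intro s
      by_cases hs : s ∈ T
      · rw [valIter_mem_T G hG T habs hs 0, valIter_mem_T G hG T habs hs 1]
      · have h0 : valIter G T 0 s = 0 := by simp [valIter, hs]
        rw [h0]; exact (valIter_mem01 G hG T 1 s).1
  | succ n ih =>
      intro s
      show pre1 G (valIter G T n) s ≤ pre1 G (valIter G T (n+1)) s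
      exact pre1_mono G hG (fun t => (valIter_mem01 G hG T n t).1)
        (fun t => (valIter_mem01 G hG T (n+1) t).1)
        (fun t => (valIter_mem01 G hG T (n+1) t).2) ih s

lemma valIter_mono (G : CGame S M) (hG : G.IsGame) (T : Set S)
    (habs : ∀ s ∈ T ∪ W2 G T, Absorbing G s) {n m : ℕ} (h : n ≤ m) (s : S) :
    valIter G T n s ≤ valIter G T m s := by
  induction m with
  | zero => rw [Nat.le_zero.1 h]
  | succ m ih =>
      rcases Nat.lt_or_ge n (m+1) with h' | h'
      · exact le_trans (ih (Nat.lt_succ_iff.1 h')) (valIter_le_succ G hG T habs m s)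
      · rw [le_antisymm h h']

lemma entryTime_le (G : CGame S M) (T : Set S) (k : ℕ) (s : S) : entryTime G T k s ≤ k := by
  unfold entryTime
  exact Nat.sInf_le rfl

lemma valIter_entryTime (G : CGame S M) (T : Set S) (k : ℕ) (s : S) :
    valIter G T (entryTime G T k s) s = valIter G T k s := by
  have : entryTime G T k s ∈ {j : ℕ | valIter G T j s = valIter G T k s} := by
    unfold entryTime
    exact Nat.sInf_mem ⟨k, rfl⟩
  exact this

/-- Number of states with strictly larger `u_k`-value. -/
noncomputable def rankN (G : CGame S M) (T : Set S) (k : ℕ) (s : S) : ℕ :=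
  (Finset.univ.filter fun s' => valIter G T k s < valIter G T k s').card

/-- The well-founded rank used for the properness argument. -/
noncomputable def mRank (G : CGame S M) (T : Set S) (k : ℕ) (s : S) : ℕ :=
  rankN G T k s * (k+1) + entryTime G T k s

lemma mRank_lt (G : CGame S M) (T : Set S) (k : ℕ) (s : S) :
    mRank G T k s < (Fintype.card S + 1) * (k+1) := by
  have h1 : rankN G T k s ≤ Fintype.card S :=
    le_trans (Finset.card_filter_le _ _) (le_of_eq Finset.card_univ)
  have h2 : entryTime G T k s ≤ k := entryTime_le G T k s
  have h3 := Nat.mul_le_mul_right (k+1) h1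
  calc mRank G T k s ≤ Fintype.card S * (k+1) + k := Nat.add_le_add h3 h2
    _ < Fintype.card S * (k+1) + (k+1) := Nat.add_lt_add_left (Nat.lt_succ_self k) _
    _ = (Fintype.card S + 1) * (k+1) := by ring

lemma preSS_pure (G : CGame S M) (v : S → ℝ) (s : S) (x : M → ℝ) (b : M) :
    preSS G v s x (pureDist b) = ∑ t, (∑ a, x a * G.δ s a b t) * v t := by
  unfold preSS pureDist
  rw [Finset.sum_comm]
  rw [Finset.sum_eq_single b]
  · rw [Finset.sum_comm]
    refine Finset.sum_congr rfl fun t _ => ?_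
    rw [Finset.sum_mul]
    refine Finset.sum_congr rfl fun a _ => ?_
    simp only [eq_self_iff_true, if_true, ite_true, mul_one]
    ring
  · intro b' _ hb'
    refine Finset.sum_eq_zero fun a _ => Finset.sum_eq_zero fun t _ => ?_
    rw [if_neg hb', mul_zero]
  · intro h; exact absurd (Finset.mem_univ b) h

lemma good_succ (G : CGame S M) (hG : G.IsGame) (T : Set S)
    (habs : ∀ s ∈ T ∪ W2 G T, Absorbing G s) (k : ℕ)
    (η : S → M → ℝ) (hη : IsSel1 G η)
    (hηopt : ∀ s', 0 < entryTime G T k s' →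
      pre1Sel G (valIter G T (entryTime G T k s' - 1)) s' (η s')
        = pre1 G (valIter G T (entryTime G T k s' - 1)) s')
    (hpos : ∀ s, s ∉ W2 G T → 0 < valIter G T (k - 1) s)
    {s : S} (hs : s ∉ T ∪ W2 G T) {b : M} (hb : b ∈ G.Γ₂ s) :
    ∃ a t, η s a ≠ 0 ∧ G.δ s a b t ≠ 0 ∧ mRank G T k t < mRank G T k s := by
  have hsT : s ∉ T := fun h => hs (Set.mem_union_left _ h)
  have hsW : s ∉ W2 G T := fun h => hs (Set.mem_union_right _ h)
  have hvnn : ∀ n t, 0 ≤ valIter G T n t := fun n t => (valIter_mem01 G hG T n t).1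
  have huk : 0 < valIter G T k s :=
    lt_of_lt_of_le (hpos s hsW) (valIter_mono G hG T habs (Nat.sub_le k 1) s)
  have hℓk : entryTime G T k s ≤ k := entryTime_le G T k s
  have hℓpos : 0 < entryTime G T k s := by
    rcases Nat.eq_zero_or_pos (entryTime G T k s) with h | h
    swap
    · exact h
    · exfalso
      have h0 : valIter G T 0 s = valIter G T k s := by
        rw [← h]; exact valIter_entryTime G T k s
      have h1 : valIter G T 0 s = 0 := by simp [valIter, hsT]
      rw [h1] at h0; exact absurd h0.symm (ne_of_gt huk)
  set ℓ := entryTime G T k s with hℓdef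
  have hℓ1 : ℓ - 1 + 1 = ℓ := Nat.succ_pred_eq_of_pos hℓpos
  have hkey : valIter G T k s ≤ ∑ t, (∑ a, η s a * G.δ s a b t) * valIter G T (ℓ - 1) t := by
    have e1 : valIter G T ℓ s = valIter G T k s := valIter_entryTime G T k s
    have e2 : valIter G T ℓ s = pre1 G (valIter G T (ℓ - 1)) s := by
      conv_lhs => rw [← hℓ1]
      rfl
    have e3 := hηopt s hℓpos
    calc valIter G T k s = pre1Sel G (valIter G T (ℓ-1)) s (η s) := by rw [e3, ← e2, e1]
      _ ≤ preSS G (valIter G T (ℓ-1)) s (η s) (pureDist b) :=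
          pre1Sel_le_preSS G hG (hvnn (ℓ-1)) s (hη s).1 (isDistOn_pureDist hb)
      _ = ∑ t, (∑ a, η s a * G.δ s a b t) * valIter G T (ℓ-1) t := preSS_pure G _ s (η s) b
  have hpnn : ∀ t, 0 ≤ ∑ a, η s a * G.δ s a b t := fun t =>
    Finset.sum_nonneg fun a _ => mul_nonneg ((hη s).1 a) (hG.2.2.1 s a b t)
  have hpsum : (∑ t, ∑ a, η s a * G.δ s a b t) = 1 := by
    rw [Finset.sum_comm]
    have h1 : ∀ a, (∑ t, η s a * G.δ s a b t) = η s a := fun a => by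
      rw [← Finset.mul_sum, hG.2.2.2 s a b, mul_one]
    simp only [h1]; exact (hη s).2.2
  by_cases hcase : ∃ t, (∑ a, η s a * G.δ s a b t) ≠ 0 ∧ valIter G T k s < valIter G T k t
  · obtain ⟨t, hpt, hlt⟩ := hcase
    obtain ⟨a, _, ha⟩ := Finset.exists_ne_zero_of_sum_ne_zero hpt
    have hane : η s a ≠ 0 := fun h => ha (by rw [h, zero_mul])
    have hdne : G.δ s a b t ≠ 0 := fun h => ha (by rw [h, mul_zero])
    refine ⟨a, t, hane, hdne, ?_⟩
    have hcard : rankN G T k t < rankN G T k s := by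
      unfold rankN
      apply Finset.card_lt_card
      rw [Finset.ssubset_iff_of_subset]
      · exact ⟨t, Finset.mem_filter.2 ⟨Finset.mem_univ t, hlt⟩, by simp [Finset.mem_filter]⟩
      · intro s' hs'
        rw [Finset.mem_filter] at hs' ⊢
        exact ⟨hs'.1, lt_trans hlt hs'.2⟩
    have h2 := Nat.mul_le_mul_right (k+1) (Nat.succ_le_of_lt hcard)
    unfold mRank
    calc rankN G T k t * (k+1) + entryTime G T k t
        ≤ rankN G T k t * (k+1) + k := Nat.add_le_add_left (entryTime_le G T k t) _
      _ < rankN G T k t * (k+1) + (k+1) := Nat.add_lt_add_left (Nat.lt_succ_self k) _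
      _ = (rankN G T k t + 1) * (k+1) := by ring
      _ ≤ rankN G T k s * (k+1) := h2
      _ ≤ rankN G T k s * (k+1) + entryTime G T k s := Nat.le_add_right _ _
  · push_neg at hcase
    have hub : ∀ t, (∑ a, η s a * G.δ s a b t) ≠ 0 → valIter G T (ℓ-1) t ≤ valIter G T k s :=
      fun t ht => le_trans (valIter_mono G hG T habs (by omega : ℓ - 1 ≤ k) t) (hcase t ht)
    have hterm : ∀ t ∈ Finset.univ,
        0 ≤ (∑ a, η s a * G.δ s a b t) * (valIter G T k s - valIter G T (ℓ-1) t) := by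
      intro t _
      by_cases ht : (∑ a, η s a * G.δ s a b t) = 0
      · rw [ht, zero_mul]
      · exact mul_nonneg (hpnn t) (by linarith [hub t ht])
    have hsum_le :
        (∑ t, (∑ a, η s a * G.δ s a b t) * (valIter G T k s - valIter G T (ℓ-1) t)) ≤ 0 := by
      have expand :
          (∑ t, (∑ a, η s a * G.δ s a b t) * (valIter G T k s - valIter G T (ℓ-1) t))
            = (∑ t, ∑ a, η s a * G.δ s a b t) * valIter G T k s
              - ∑ t, (∑ a, η s a * G.δ s a b t) * valIter G T (ℓ-1) t := by
        rw [Finset.sum_mul, ← Finset.sum_sub_distrib]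
        exact Finset.sum_congr rfl fun t _ => by ring
      rw [expand, hpsum, one_mul]
      linarith [hkey]
    have hall0 := (Finset.sum_eq_zero_iff_of_nonneg hterm).1
      (le_antisymm hsum_le (Finset.sum_nonneg hterm))
    have hone : (∑ t, ∑ a, η s a * G.δ s a b t) ≠ 0 := by rw [hpsum]; norm_num
    obtain ⟨t, _, hpt⟩ := Finset.exists_ne_zero_of_sum_ne_zero hone
    have heq : valIter G T (ℓ-1) t = valIter G T k s := by
      have h0 := hall0 t (Finset.mem_univ t)
      rcases mul_eq_zero.1 h0 with h | h
      · exact absurd h hpt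
      · linarith
    have hle1 : valIter G T (ℓ-1) t ≤ valIter G T k t :=
      valIter_mono G hG T habs (by omega : ℓ - 1 ≤ k) t
    have hle2 : valIter G T k t ≤ valIter G T k s := hcase t hpt
    have heq2 : valIter G T (ℓ-1) t = valIter G T k t := le_antisymm hle1 (by linarith)
    have heq3 : valIter G T k t = valIter G T k s := by rw [← heq2, heq]
    have hℓt : entryTime G T k t ≤ ℓ - 1 := by
      unfold entryTime
      exact Nat.sInf_le heq2
    obtain ⟨a, _, ha⟩ := Finset.exists_ne_zero_of_sum_ne_zero hpt
    have hane : η s a ≠ 0 := fun h => ha (by rw [h, zero_mul])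
    have hdne : G.δ s a b t ≠ 0 := fun h => ha (by rw [h, mul_zero])
    refine ⟨a, t, hane, hdne, ?_⟩
    have hNeq : rankN G T k t = rankN G T k s := by
      unfold rankN
      congr 1
      apply Finset.ext
      intro s'
      simp [Finset.mem_filter, heq3]
    unfold mRank
    rw [hNeq]
    exact Nat.add_lt_add_left (by omega) _

lemma reachW_nonneg (G : CGame S M) (hG : G.IsGame) (σ₁ σ₂ : List S → S → M → ℝ)
    (hσ₁ : IsStrat1 G σ₁) (hσ₂ : IsStrat2 G σ₂) (Tgt : Set S) :
    ∀ n w s, 0 ≤ reachW G σ₁ σ₂ Tgt n w s := by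
  intro n
  induction n with
  | zero => intro w s; rw [reachW]; split <;> norm_num
  | succ n ih =>
      intro w s; rw [reachW]; split
      · norm_num
      · refine Finset.sum_nonneg fun a _ => Finset.sum_nonneg fun b _ =>
          Finset.sum_nonneg fun t _ => ?_
        exact mul_nonneg (mul_nonneg (mul_nonneg ((hσ₁ w s).1 a) ((hσ₂ w s).1 b))
          (hG.2.2.1 s a b t)) (ih (w ++ [s]) t)

lemma sum3_one (G : CGame S M) (hG : G.IsGame) (σ₁ σ₂ : List S → S → M → ℝ)
    (hσ₁ : IsStrat1 G σ₁) (hσ₂ : IsStrat2 G σ₂) (w : List S) (s : S) :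
    (∑ a, ∑ b, ∑ t, σ₁ w s a * σ₂ w s b * G.δ s a b t) = 1 := by
  have h1 : ∀ a b, (∑ t, σ₁ w s a * σ₂ w s b * G.δ s a b t) = σ₁ w s a * σ₂ w s b := by
    intro a b; rw [← Finset.mul_sum, hG.2.2.2 s a b, mul_one]
  have h2 : ∀ a, (∑ b, σ₁ w s a * σ₂ w s b) = σ₁ w s a := by
    intro a; rw [← Finset.mul_sum, (hσ₂ w s).2.2, mul_one]
  simp only [h1, h2]; exact (hσ₁ w s).2.2

lemma reachW_le_one (G : CGame S M) (hG : G.IsGame) (σ₁ σ₂ : List S → S → M → ℝ)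
    (hσ₁ : IsStrat1 G σ₁) (hσ₂ : IsStrat2 G σ₂) (Tgt : Set S) :
    ∀ n w s, reachW G σ₁ σ₂ Tgt n w s ≤ 1 := by
  intro n
  induction n with
  | zero => intro w s; rw [reachW]; split <;> norm_num
  | succ n ih =>
      intro w s; rw [reachW]; split
      · norm_num
      · have hb : (∑ a, ∑ b, ∑ t, σ₁ w s a * σ₂ w s b * G.δ s a b t
            * reachW G σ₁ σ₂ Tgt n (w ++ [s]) t)
            ≤ ∑ a, ∑ b, ∑ t, σ₁ w s a * σ₂ w s b * G.δ s a b t := by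
          refine Finset.sum_le_sum fun a _ => Finset.sum_le_sum fun b _ =>
            Finset.sum_le_sum fun t _ => ?_
          refine mul_le_of_le_one_right ?_ (ih (w ++ [s]) t)
          exact mul_nonneg (mul_nonneg ((hσ₁ w s).1 a) ((hσ₂ w s).1 b)) (hG.2.2.1 s a b t)
        exact hb.trans (le_of_eq (sum3_one G hG σ₁ σ₂ hσ₁ hσ₂ w s))

lemma reachW_one_of_mem (G : CGame S M) (σ₁ σ₂ : List S → S → M → ℝ) (Tgt : Set S)
    (n : ℕ) (w : List S) {s : S} (hs : s ∈ Tgt) : reachW G σ₁ σ₂ Tgt n w s = 1 := by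
  cases n <;> (rw [reachW]; rw [if_pos hs])

lemma reachW_le_succ (G : CGame S M) (hG : G.IsGame) (σ₁ σ₂ : List S → S → M → ℝ)
    (hσ₁ : IsStrat1 G σ₁) (hσ₂ : IsStrat2 G σ₂) (Tgt : Set S) :
    ∀ n w s, reachW G σ₁ σ₂ Tgt n w s ≤ reachW G σ₁ σ₂ Tgt (n+1) w s := by
  intro n
  induction n with
  | zero =>
      intro w s
      by_cases hs : s ∈ Tgt
      · rw [reachW_one_of_mem G σ₁ σ₂ Tgt 0 w hs, reachW_one_of_mem G σ₁ σ₂ Tgt 1 w hs]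
      · have h0 : reachW G σ₁ σ₂ Tgt 0 w s = 0 := by rw [reachW, if_neg hs]
        rw [h0]; exact reachW_nonneg G hG σ₁ σ₂ hσ₁ hσ₂ Tgt 1 w s
  | succ n ih =>
      intro w s
      by_cases hs : s ∈ Tgt
      · rw [reachW_one_of_mem G σ₁ σ₂ Tgt _ w hs, reachW_one_of_mem G σ₁ σ₂ Tgt _ w hs]
      · rw [show (n+1+1) = (n+1)+1 from rfl]
        rw [reachW, if_neg hs, reachW, if_neg hs]
        refine Finset.sum_le_sum fun a _ => Finset.sum_le_sum fun b _ =>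
          Finset.sum_le_sum fun t _ => ?_
        refine mul_le_mul_of_nonneg_left (ih (w ++ [s]) t) ?_
        exact mul_nonneg (mul_nonneg ((hσ₁ w s).1 a) ((hσ₂ w s).1 b)) (hG.2.2.1 s a b t)

lemma reachW_mono (G : CGame S M) (hG : G.IsGame) (σ₁ σ₂ : List S → S → M → ℝ)
    (hσ₁ : IsStrat1 G σ₁) (hσ₂ : IsStrat2 G σ₂) (Tgt : Set S)
    {n m : ℕ} (h : n ≤ m) (w : List S) (s : S) :
    reachW G σ₁ σ₂ Tgt n w s ≤ reachW G σ₁ σ₂ Tgt m w s := by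
  induction m with
  | zero => rw [Nat.le_zero.1 h]
  | succ m ih =>
      rcases Nat.lt_or_ge n (m+1) with h' | h'
      · exact le_trans (ih (Nat.lt_succ_iff.1 h'))
          (reachW_le_succ G hG σ₁ σ₂ hσ₁ hσ₂ Tgt m w s)
      · rw [le_antisymm h h']

lemma reachW_succ_eq (G : CGame S M) (η : S → M → ℝ) (σ₂ : List S → S → M → ℝ)
    (Tgt : Set S) (n : ℕ) (w : List S) {s : S} (hs : s ∉ Tgt) :
    reachW G (ml η) σ₂ Tgt (n+1) w s
      = ∑ b, σ₂ w s b * ∑ a, ∑ t, η s a * G.δ s a b t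
          * reachW G (ml η) σ₂ Tgt n (w ++ [s]) t := by
  rw [reachW, if_neg hs]
  rw [Finset.sum_comm]
  refine Finset.sum_congr rfl fun b _ => ?_
  rw [Finset.mul_sum]
  refine Finset.sum_congr rfl fun a _ => ?_
  rw [Finset.mul_sum]
  refine Finset.sum_congr rfl fun t _ => ?_
  show ml η w s a * σ₂ w s b * G.δ s a b t * _ = _
  simp only [ml]; ring

lemma contraction (G : CGame S M) (hG : G.IsGame) (T : Set S) (k : ℕ)
    (η : S → M → ℝ) (hη : IsSel1 G η)
    (σ₂ : List S → S → M → ℝ) (hσ₂ : IsStrat2 G σ₂)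
    (p : ℝ) (hp0 : 0 < p) (hp1 : p ≤ 1)
    (hgood : ∀ s, s ∉ T ∪ W2 G T → ∀ b ∈ G.Γ₂ s,
      ∃ a t, p ≤ η s a * G.δ s a b t ∧ mRank G T k t < mRank G T k s)
    (c : ℝ) (hc : 0 ≤ c) (n : ℕ)
    (hn : ∀ w t, 1 - reachW G (ml η) σ₂ (T ∪ W2 G T) n w t ≤ c) :
    ∀ i w s, (s ∈ T ∪ W2 G T ∨ mRank G T k s < i) →
      1 - reachW G (ml η) σ₂ (T ∪ W2 G T) (n + i) w s ≤ (1 - p ^ i) * c := by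
  have hσ₁ : IsStrat1 G (ml η) := fun w s => hη s
  intro i
  induction i with
  | zero =>
      intro w s hcond
      rcases hcond with h | h
      · rw [reachW_one_of_mem G (ml η) σ₂ _ _ _ h]
        norm_num
      · exact absurd h (Nat.not_lt_zero _)
  | succ i ih =>
      intro w s hcond
      have hpi1 : p ^ (i+1) ≤ 1 := pow_le_one₀ hp0.le hp1
      by_cases hsT : s ∈ T ∪ W2 G T
      · rw [reachW_one_of_mem G (ml η) σ₂ _ _ _ hsT]
        nlinarith
      · have hrank' : mRank G T k s ≤ i := by
          rcases hcond with h | h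
          · exact absurd h hsT
          · exact Nat.lt_succ_iff.1 h
        rw [show n + (i+1) = (n+i) + 1 from rfl, reachW_succ_eq G η σ₂ _ (n+i) w hsT]
        set R := fun t => reachW G (ml η) σ₂ (T ∪ W2 G T) (n+i) (w ++ [s]) t with hR
        have hR1 : ∀ t, 1 - c ≤ R t := by
          intro t
          have hmono := reachW_mono G hG (ml η) σ₂ hσ₁ hσ₂ (T ∪ W2 G T)
            (Nat.le_add_right n i) (w ++ [s]) t
          have := hn (w ++ [s]) t
          simp only [hR]; linarith
        have hInner : ∀ b ∈ G.Γ₂ s,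
            1 - (1 - p^(i+1)) * c ≤ ∑ a, ∑ t, η s a * G.δ s a b t * R t := by
          intro b hb
          obtain ⟨a₀, t₀, hpa, hrk⟩ := hgood s hsT b hb
          have hprod_nn : 0 ≤ η s a₀ * G.δ s a₀ b t₀ := le_trans hp0.le hpa
          have hR0 : 1 - (1 - p^i) * c ≤ R t₀ := by
            have := ih (w ++ [s]) t₀ (Or.inr (lt_of_lt_of_le hrk hrank'))
            simp only [hR]; linarith
          have hsum1 : (∑ a, ∑ t, η s a * G.δ s a b t) = 1 := by
            have h1 : ∀ a, (∑ t, η s a * G.δ s a b t) = η s a := fun a => by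
              rw [← Finset.mul_sum, hG.2.2.2 s a b, mul_one]
            simp only [h1]; exact (hη s).2.2
          have hterm_nn : ∀ a t, 0 ≤ η s a * G.δ s a b t * (R t - (1 - c)) := fun a t =>
            mul_nonneg (mul_nonneg ((hη s).1 a) (hG.2.2.1 s a b t)) (by linarith [hR1 t])
          have hsingle : η s a₀ * G.δ s a₀ b t₀ * (R t₀ - (1 - c))
              ≤ ∑ a, ∑ t, η s a * G.δ s a b t * (R t - (1 - c)) := by
            calc η s a₀ * G.δ s a₀ b t₀ * (R t₀ - (1 - c))
                ≤ ∑ t, η s a₀ * G.δ s a₀ b t * (R t - (1 - c)) :=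
                  Finset.single_le_sum (fun t _ => hterm_nn a₀ t) (Finset.mem_univ t₀)
              _ ≤ ∑ a, ∑ t, η s a * G.δ s a b t * (R t - (1 - c)) :=
                  Finset.single_le_sum
                    (fun a _ => Finset.sum_nonneg fun t _ => hterm_nn a t)
                    (Finset.mem_univ a₀)
          have hlow : p * (p^i * c) ≤ η s a₀ * G.δ s a₀ b t₀ * (R t₀ - (1 - c)) := by
            have h1 : p^i * c ≤ R t₀ - (1 - c) := by linarith
            have h2 : 0 ≤ p^i * c := mul_nonneg (pow_nonneg hp0.le i) hc
            exact mul_le_mul hpa h1 h2 hprod_nn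
          have hexpand : (∑ a, ∑ t, η s a * G.δ s a b t * R t)
              = (∑ a, ∑ t, η s a * G.δ s a b t * (R t - (1 - c)))
                + (1 - c) * (∑ a, ∑ t, η s a * G.δ s a b t) := by
            rw [Finset.mul_sum, ← Finset.sum_add_distrib]
            refine Finset.sum_congr rfl fun a _ => ?_
            rw [Finset.mul_sum, ← Finset.sum_add_distrib]
            exact Finset.sum_congr rfl fun t _ => by ring
          rw [hexpand, hsum1, mul_one]
          have hppi : p * (p^i * c) = p^(i+1) * c := by ring
          nlinarith [le_trans hlow hsingle]
        have hfinal : ∑ b, σ₂ w s b * (1 - (1 - p^(i+1)) * c)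
            ≤ ∑ b, σ₂ w s b * (∑ a, ∑ t, η s a * G.δ s a b t * R t) := by
          refine Finset.sum_le_sum fun b _ => ?_
          by_cases hb0 : σ₂ w s b = 0
          · rw [hb0, zero_mul, zero_mul]
          · exact mul_le_mul_of_nonneg_left (hInner b ((hσ₂ w s).2.1 b hb0)) ((hσ₂ w s).1 b)
        have hsumσ : (∑ b, σ₂ w s b * (1 - (1 - p^(i+1)) * c)) = 1 - (1 - p^(i+1)) * c := by
          rw [← Finset.sum_mul, (hσ₂ w s).2.2, one_mul]
        rw [hsumσ] at hfinal
        linarith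

lemma global_bound (G : CGame S M) (hG : G.IsGame) (T : Set S) (k : ℕ)
    (η : S → M → ℝ) (hη : IsSel1 G η)
    (σ₂ : List S → S → M → ℝ) (hσ₂ : IsStrat2 G σ₂)
    (p : ℝ) (hp0 : 0 < p) (hp1 : p ≤ 1)
    (hgood : ∀ s, s ∉ T ∪ W2 G T → ∀ b ∈ G.Γ₂ s,
      ∃ a t, p ≤ η s a * G.δ s a b t ∧ mRank G T k t < mRank G T k s)
    (N : ℕ) (hN : ∀ s, mRank G T k s < N) :
    ∀ j w s, 1 - reachW G (ml η) σ₂ (T ∪ W2 G T) (j * N) w s ≤ (1 - p^N)^j := by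
  have hσ₁ : IsStrat1 G (ml η) := fun w s => hη s
  have h01 : p ^ N ≤ 1 := pow_le_one₀ hp0.le hp1
  intro j
  induction j with
  | zero =>
      intro w s
      simp only [Nat.zero_mul, pow_zero]
      have := reachW_nonneg G hG (ml η) σ₂ hσ₁ hσ₂ (T ∪ W2 G T) 0 w s
      linarith
  | succ j ih =>
      intro w s
      have hc : (0:ℝ) ≤ (1 - p^N)^j := pow_nonneg (by linarith) j
      have hcontr := contraction G hG T k η hη σ₂ hσ₂ p hp0 hp1 hgood
        ((1 - p^N)^j) hc (j*N) (fun w t => ih w t) N w s (Or.inr (hN s))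
      rw [show (j+1) * N = j*N + N from by ring]
      calc 1 - reachW G (ml η) σ₂ (T ∪ W2 G T) (j*N + N) w s
          ≤ (1 - p^N) * (1 - p^N)^j := hcontr
        _ = (1 - p^N)^(j+1) := by ring

end CGame

/-- **The value-iteration selector `η_k` is proper.**
For all `k ≥ 0`, if `u_{k−1}(s) > 0` for all states `s ∉ W₂`, then the memoryless
strategy induced by the selector `η_k` is proper: against every player-2 strategy
and from every state, `T ∪ W₂` is reached with probability 1. -/
theorem value_iteration_selector_proper
    {S M : Type} [Fintype S] [DecidableEq S] [Fintype M] [DecidableEq M]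
    (G : CGame S M) (hG : G.IsGame) (T : Set S)
    (habs : ∀ s ∈ T ∪ CGame.W2 G T, CGame.Absorbing G s)
    (k : ℕ)
    (η : S → M → ℝ) (hη : CGame.IsSel1 G η)
    (hηopt : ∀ s', 0 < CGame.entryTime G T k s' →
      CGame.pre1Sel G (CGame.valIter G T (CGame.entryTime G T k s' - 1)) s' (η s')
        = CGame.pre1 G (CGame.valIter G T (CGame.entryTime G T k s' - 1)) s')
    (hηunif : ∀ s', CGame.entryTime G T k s' = 0 → η s' = CGame.uniformSel G s')
    (hpos : ∀ s, s ∉ CGame.W2 G T → 0 < CGame.valIter G T (k - 1) s) :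
    ∀ σ₂, CGame.IsStrat2 G σ₂ →
      ∀ s : S, CGame.prReach G (CGame.ml η) σ₂ (T ∪ CGame.W2 G T) s = 1 := by
  intro σ₂ hσ₂ s
  classical
  have hσ₁ : CGame.IsStrat1 G (CGame.ml η) := fun w s' => hη s'
  unfold CGame.prReach
  have hbdd : BddAbove (Set.range fun n =>
      CGame.reachW G (CGame.ml η) σ₂ (T ∪ CGame.W2 G T) n [] s) := by
    refine ⟨1, ?_⟩; rintro _ ⟨n, rfl⟩
    exact CGame.reachW_le_one G hG _ _ hσ₁ hσ₂ _ n [] s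
  have hle : (⨆ n : ℕ, CGame.reachW G (CGame.ml η) σ₂ (T ∪ CGame.W2 G T) n [] s) ≤ 1 :=
    ciSup_le fun n => CGame.reachW_le_one G hG _ _ hσ₁ hσ₂ _ n [] s
  by_cases hall : ∀ t : S, t ∈ T ∪ CGame.W2 G T
  · refine le_antisymm hle ?_
    have h1 : CGame.reachW G (CGame.ml η) σ₂ (T ∪ CGame.W2 G T) 0 [] s = 1 :=
      CGame.reachW_one_of_mem G _ σ₂ _ 0 [] (hall s)
    exact le_trans (le_of_eq h1.symm) (le_ciSup hbdd 0)
  · push_neg at hall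
    set Pos : Finset (S × M × M × S) := Finset.univ.filter
      (fun q => 0 < η q.1 q.2.1 * G.δ q.1 q.2.1 q.2.2.1 q.2.2.2) with hPosdef
    have hmemPos : ∀ (s' : S) (a b : M) (t : S), η s' a ≠ 0 → G.δ s' a b t ≠ 0 →
        (s', a, b, t) ∈ Pos := by
      intro s' a b t hane hdne
      rw [hPosdef]
      simp only [Finset.mem_filter, Finset.mem_univ, true_and]
      exact lt_of_le_of_ne (mul_nonneg ((hη s').1 a) (hG.2.2.1 s' a b t))
        (Ne.symm (mul_ne_zero hane hdne))
    have hPosne : Pos.Nonempty := by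
      obtain ⟨t₀, ht₀⟩ := hall
      obtain ⟨b₀, hb₀⟩ := hG.2.1 t₀
      obtain ⟨a, t, hane, hdne, _⟩ :=
        CGame.good_succ G hG T habs k η hη hηopt hpos ht₀ hb₀
      exact ⟨(t₀, a, b₀, t), hmemPos t₀ a b₀ t hane hdne⟩
    set p : ℝ := Pos.inf' hPosne (fun q => η q.1 q.2.1 * G.δ q.1 q.2.1 q.2.2.1 q.2.2.2)
      with hpdef
    have hp0 : 0 < p := by
      rw [hpdef, Finset.lt_inf'_iff]
      intro q hq
      rw [hPosdef] at hq
      exact (Finset.mem_filter.1 hq).2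
    have hp1 : p ≤ 1 := by
      obtain ⟨q, hq⟩ := hPosne
      refine le_trans (Finset.inf'_le _ hq) ?_
      exact mul_le_one₀ ((hη q.1).le_one q.2.1) (hG.2.2.1 _ _ _ _)
        (CGame.delta_le_one G hG _ _ _ _)
    have hgood : ∀ s', s' ∉ T ∪ CGame.W2 G T → ∀ b ∈ G.Γ₂ s',
        ∃ a t, p ≤ η s' a * G.δ s' a b t ∧ CGame.mRank G T k t < CGame.mRank G T k s' := by
      intro s' hs' b hb
      obtain ⟨a, t, hane, hdne, hrk⟩ :=
        CGame.good_succ G hG T habs k η hη hηopt hpos hs' hb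
      exact ⟨a, t, Finset.inf'_le _ (hmemPos s' a b t hane hdne), hrk⟩
    set N : ℕ := (Fintype.card S + 1) * (k+1) with hNdef
    have hNlt : ∀ t, CGame.mRank G T k t < N := fun t => CGame.mRank_lt G T k t
    have hglob := CGame.global_bound G hG T k η hη σ₂ hσ₂ p hp0 hp1 hgood N hNlt
    have h01 : p ^ N ≤ 1 := pow_le_one₀ hp0.le hp1
    have hpN : 0 < p ^ N := pow_pos hp0 N
    refine le_antisymm hle ?_
    have htend : Filter.Tendsto (fun j : ℕ => 1 - (1 - p^N)^j) Filter.atTop (nhds 1) := by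
      have h := tendsto_pow_atTop_nhds_zero_of_lt_one
        (by linarith : (0:ℝ) ≤ 1 - p^N) (by linarith : 1 - p^N < 1)
      have h2 := Filter.Tendsto.const_sub (1:ℝ) h
      simpa using h2
    refine le_of_tendsto htend (Filter.Eventually.of_forall fun j => ?_)
    have h1 := hglob j [] s
    have h2 : CGame.reachW G (CGame.ml η) σ₂ (T ∪ CGame.W2 G T) (j*N) [] s
        ≤ ⨆ n : ℕ, CGame.reachW G (CGame.ml η) σ₂ (T ∪ CGame.W2 G T) n [] s :=
      le_ciSup hbdd (j*N)
    linarith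
end

section
/- Let G be a binary Markov chain on a finite state set S with a reachability objective Reach(T) for T ⊆ S. Then for every state s ∈ S, the probability of reaching T from s equals p/q for some natural numbers p, q with p, q ≤ 4^{|S|−1}. -/
open scoped Classical

/-- A finite Markov chain: a transition function `δ` over a finite state set. -/
structure MChain (St : Type) where
  δ : St → St → ℝ

namespace MChain

variable {St : Type} [Fintype St] [DecidableEq St]

/-- Well-formedness: each row of `δ` is a probability distribution. -/
def IsChain (g : MChain St) : Prop :=
  (∀ s t, 0 ≤ g.δ s t) ∧ ∀ s, (∑ t, g.δ s t) = 1

/-- A Markov chain is binary if every state has at most two successors with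
positive probability, and when it has exactly two, each has probability 1/2. -/
def Binary (g : MChain St) : Prop :=
  ∀ s, ({t | g.δ s t ≠ 0} : Set St).ncard ≤ 2 ∧
    (({t | g.δ s t ≠ 0} : Set St).ncard = 2 → ∀ t, g.δ s t ≠ 0 → g.δ s t = 1 / 2)

/-- Probability of reaching `T` within `n` steps from `s`. -/
noncomputable def reachW (g : MChain St) (T : Set St) : ℕ → St → ℝ
  | 0, s => if s ∈ T then 1 else 0
  | n + 1, s => if s ∈ T then 1 else ∑ t, g.δ s t * reachW g T n t

/-- Probability of eventually reaching `T` from `s`. -/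
noncomputable def prReach (g : MChain St) (T : Set St) (s : St) : ℝ :=
  ⨆ n : ℕ, reachW g T n s

end MChain

/-! The values at the states outside `T` from which `T` is reachable solve `x = P x + b`, where
`P` is the transition matrix restricted to these states and `b` the mass sent into `T`. A maximum
principle makes `I - P` nonsingular: a nonzero solution of `x = P x` attains its positive maximum
on a set of states closed under transitions and disjoint from `T`, which is absurd for states that
can reach `T`. For a binary chain `2 (I - P)` and `2 b` are integral and their rows have ℓ¹-norm at
most `4`, so by Cramer's rule and `|det M| ≤ ∏ᵢ ∑ⱼ |M i j|` each value is a quotient of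
nonnegative integers at most `4 ^ n`, where `n < |S|` is the number of these states. -/

namespace Matrix

variable {n : Type*} [Fintype n] [DecidableEq n]

theorem abs_det_le_prod_sum_abs (M : Matrix n n ℝ) : |M.det| ≤ ∏ i, ∑ j, |M i j| := by
  rw [← det_transpose, det_apply]
  calc |∑ σ : Equiv.Perm n, Equiv.Perm.sign σ • ∏ i, Mᵀ (σ i) i|
      ≤ ∑ σ : Equiv.Perm n, ∏ i, |M i (σ i)| := by
        refine (Finset.abs_sum_le_sum_abs _ _).trans (Finset.sum_le_sum fun σ _ => ?_)
        rw [← Real.norm_eq_abs, norm_units_zsmul, Real.norm_eq_abs, Finset.abs_prod]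
        rfl
    _ ≤ ∑ f : n → n, ∏ i, |M i (f i)| :=
        (Finset.sum_map _ ⟨fun σ : Equiv.Perm n => ⇑σ, Equiv.coe_fn_injective⟩
          fun f => ∏ i, |M i (f i)|).symm.trans_le
          (Finset.sum_le_univ_sum_of_nonneg fun f => by positivity)
    _ = ∏ i, ∑ j, |M i j| := (Fintype.prod_sum fun i j => |M i j|).symm

theorem sum_abs_updateCol_le (A : Matrix n n ℝ) (k : n) (c : n → ℝ) (i : n) :
    ∑ j, |A.updateCol k c i j| ≤ |c i| + ∑ j, |A i j| := by
  rw [← Finset.add_sum_erase _ _ (Finset.mem_univ k), updateCol_self]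
  refine add_le_add_right ?_ _
  refine (Finset.sum_le_sum fun j hj => ?_).trans
    (Finset.sum_le_univ_sum_of_nonneg fun j => abs_nonneg (A i j))
  rw [updateCol_ne (Finset.ne_of_mem_erase hj)]

theorem eq_det_updateCol_div_det {K : Type*} [Field K] {A : Matrix n n K} {x b : n → K}
    (hA : A.det ≠ 0) (h : A *ᵥ x = b) (k : n) : x k = (A.updateCol k b).det / A.det := by
  have hunit : IsUnit A.det := isUnit_iff_ne_zero.mpr hA
  have hx : x = A⁻¹ *ᵥ b := by rw [← h, mulVec_mulVec, nonsing_inv_mul _ hunit, one_mulVec]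
  rw [eq_div_iff hA, ← cramer_apply, ← det_smul_inv_mulVec_eq_cramer A b hunit, ← hx,
    Pi.smul_apply, smul_eq_mul, mul_comm]

theorem exists_intCast_det {M : Matrix n n ℝ} (hM : ∀ i j, ∃ z : ℤ, M i j = z) :
    ∃ z : ℤ, M.det = z := by
  choose A hA using hM
  refine ⟨(Matrix.of A).det, ?_⟩
  have : M = (Int.castRingHom ℝ).mapMatrix (Matrix.of A) := by ext i j; simp [hA]
  rw [this, ← RingHom.map_det, eq_intCast]

theorem exists_nat_div_of_mulVec_eq {A : Matrix n n ℝ} {x c : n → ℝ}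
    (hA : ∀ i j, ∃ z : ℤ, A i j = z) (hc : ∀ i, ∃ z : ℤ, c i = z) (hdet : A.det ≠ 0)
    (hx : A *ᵥ x = c) {r : n → ℕ} (hr : ∀ i, |c i| + ∑ j, |A i j| ≤ r i) {k : n}
    (hxk : 0 ≤ x k) :
    ∃ p q : ℕ, 0 < q ∧ p ≤ ∏ i, r i ∧ q ≤ ∏ i, r i ∧ x k = p / q := by
  obtain ⟨d, hd⟩ := exists_intCast_det hA
  obtain ⟨N, hN⟩ := exists_intCast_det (M := A.updateCol k c) fun i j => by
    rw [updateCol_apply]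
    split_ifs
    exacts [hc i, hA i j]
  have hbound : ∀ M : Matrix n n ℝ, (∀ i, ∑ j, |M i j| ≤ r i) → |M.det| ≤ ∏ i, (r i : ℝ) :=
    fun M hM => (abs_det_le_prod_sum_abs M).trans
      (Finset.prod_le_prod (fun i _ => by positivity) fun i _ => hM i)
  have hnatAbs_le : ∀ z : ℤ, |(z : ℝ)| ≤ ∏ i, (r i : ℝ) → z.natAbs ≤ ∏ i, r i := fun z hz => by
    have : ((z.natAbs : ℕ) : ℝ) ≤ ((∏ i, r i : ℕ) : ℝ) := by
      rwa [Nat.cast_natAbs, Int.cast_abs, Nat.cast_prod]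
    exact_mod_cast this
  refine ⟨N.natAbs, d.natAbs, Int.natAbs_pos.mpr ?_, hnatAbs_le N ?_, hnatAbs_le d ?_, ?_⟩
  · rintro rfl
    exact hdet (by rw [hd, Int.cast_zero])
  · exact hN ▸ hbound _ fun i => (sum_abs_updateCol_le A k c i).trans (hr i)
  · exact hd ▸ hbound A fun i => (le_add_of_nonneg_left (abs_nonneg _)).trans (hr i)
  · rw [← abs_of_nonneg hxk, eq_det_updateCol_div_det hdet hx k, hN, hd, abs_div,
      Nat.cast_natAbs, Nat.cast_natAbs, Int.cast_abs, Int.cast_abs]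

end Matrix

theorem eq_of_sum_mul_eq_of_le {ι : Type*} [Fintype ι] {p u : ι → ℝ} {M : ℝ}
    (hp : ∀ i, 0 ≤ p i) (hp1 : ∑ i, p i = 1) (hu : ∀ i, u i ≤ M) (h : ∑ i, p i * u i = M)
    {i : ι} (hi : p i ≠ 0) : u i = M := by
  have hsum : ∑ j, p j * (M - u j) = 0 := by
    simp only [mul_sub, Finset.sum_sub_distrib, ← Finset.sum_mul, hp1, h, one_mul, sub_self]
  have hterm := (Finset.sum_eq_zero_iff_of_nonneg fun j _ =>
    mul_nonneg (hp j) (sub_nonneg.mpr (hu j))).mp hsum i (Finset.mem_univ i)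
  rcases mul_eq_zero.mp hterm with h0 | h0
  · exact absurd h0 hi
  · linarith

namespace MChain

variable {St : Type} [Fintype St] {g : MChain St} {T : Set St}

theorem Binary.delta_eq (hg : g.IsChain) (hbin : g.Binary) (s t : St) :
    g.δ s t = 0 ∨ g.δ s t = 1 / 2 ∨ g.δ s t = 1 := by
  by_cases h0 : g.δ s t = 0
  · exact Or.inl h0
  by_cases h2 : ({u | g.δ s u ≠ 0} : Set St).ncard = 2
  · exact Or.inr (Or.inl ((hbin s).2 h2 t h0))
  have hle : ({u | g.δ s u ≠ 0} : Set St).ncard ≤ 1 := by have := (hbin s).1; omega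
  have honly : ∀ u, u ≠ t → g.δ s u = 0 := fun u hu =>
    by_contra fun h => hu ((Set.ncard_le_one (Set.toFinite _)).mp hle u h t h0)
  refine Or.inr (Or.inr ?_)
  rw [← hg.2 s, Finset.sum_eq_single t (fun u _ hu => honly u hu) (by simp)]

theorem Binary.exists_intCast_two_mul_delta (hg : g.IsChain) (hbin : g.Binary) (s t : St) :
    ∃ z : ℤ, 2 * g.δ s t = z := by
  rcases Binary.delta_eq hg hbin s t with h | h | h <;> rw [h]
  exacts [⟨0, by norm_num⟩, ⟨1, by norm_num⟩, ⟨2, by norm_num⟩]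

theorem reachW_nonneg (hg : g.IsChain) (n : ℕ) (s : St) : 0 ≤ g.reachW T n s := by
  induction n generalizing s with
  | zero => rw [reachW]; split_ifs <;> norm_num
  | succ n ih =>
    rw [reachW]
    split_ifs
    · exact zero_le_one
    · exact Finset.sum_nonneg fun t _ => mul_nonneg (hg.1 s t) (ih t)

theorem reachW_le_one (hg : g.IsChain) (n : ℕ) (s : St) : g.reachW T n s ≤ 1 := by
  induction n generalizing s with
  | zero => rw [reachW]; split_ifs <;> norm_num
  | succ n ih =>
    rw [reachW]
    split_ifs
    · exact le_rfl
    · calc ∑ t, g.δ s t * g.reachW T n t ≤ ∑ t, g.δ s t :=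
            Finset.sum_le_sum fun t _ => mul_le_of_le_one_right (hg.1 s t) (ih t)
        _ = 1 := hg.2 s

theorem reachW_le_succ (hg : g.IsChain) (n : ℕ) (s : St) :
    g.reachW T n s ≤ g.reachW T (n + 1) s := by
  induction n generalizing s with
  | zero =>
    rw [reachW, reachW]
    split_ifs
    · exact le_rfl
    · exact Finset.sum_nonneg fun t _ => mul_nonneg (hg.1 s t) (reachW_nonneg hg 0 t)
  | succ n ih =>
    rw [reachW, reachW]
    split_ifs
    · exact le_rfl
    · exact Finset.sum_le_sum fun t _ => mul_le_mul_of_nonneg_left (ih t) (hg.1 s t)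

theorem tendsto_reachW (hg : g.IsChain) (s : St) :
    Filter.Tendsto (fun n => g.reachW T n s) Filter.atTop (nhds (g.prReach T s)) :=
  tendsto_atTop_ciSup (monotone_nat_of_le_succ fun n => reachW_le_succ hg n s)
    ⟨1, by rintro _ ⟨n, rfl⟩; exact reachW_le_one hg n s⟩

theorem prReach_nonneg (hg : g.IsChain) (s : St) : 0 ≤ g.prReach T s :=
  ge_of_tendsto' (tendsto_reachW hg s) fun n => reachW_nonneg hg n s

theorem prReach_of_mem {s : St} (hs : s ∈ T) : g.prReach T s = 1 := by
  have h : ∀ n, g.reachW T n s = 1 := by rintro (_ | _) <;> simp [reachW, hs]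
  simp [prReach, h]

theorem prReach_eq_sum (hg : g.IsChain) {s : St} (hs : s ∉ T) :
    g.prReach T s = ∑ t, g.δ s t * g.prReach T t := by
  have hsucc : Filter.Tendsto (fun n => ∑ t, g.δ s t * g.reachW T n t) Filter.atTop
      (nhds (g.prReach T s)) := by
    simpa [reachW, hs] using (Filter.tendsto_add_atTop_iff_nat 1).mpr (tendsto_reachW (T := T) hg s)
  exact tendsto_nhds_unique hsucc
    (tendsto_finsetSum _ fun t _ => (tendsto_reachW hg t).const_mul _)

def CanReach (g : MChain St) (T : Set St) (s : St) : Prop :=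
  ∃ n, 0 < g.reachW T n s

theorem prReach_eq_zero_of_not_canReach (hg : g.IsChain) {s : St} (hs : ¬ g.CanReach T s) :
    g.prReach T s = 0 := by
  have h : ∀ n, g.reachW T n s = 0 := fun n =>
    le_antisymm (not_lt.mp fun hn => hs ⟨n, hn⟩) (reachW_nonneg hg n s)
  simp [prReach, h]

theorem not_canReach_of_closed {A : Set St} (hAT : ∀ s ∈ A, s ∉ T)
    (hA : ∀ s ∈ A, ∀ t, g.δ s t ≠ 0 → t ∈ A) {s : St} (hs : s ∈ A) : ¬ g.CanReach T s := by
  suffices h : ∀ n, ∀ s ∈ A, g.reachW T n s = 0 by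
    rintro ⟨n, hn⟩
    exact hn.ne' (h n s hs)
  intro n
  induction n with
  | zero => intro s hs; simp [reachW, hAT s hs]
  | succ n ih =>
    intro s hs
    rw [reachW, if_neg (hAT s hs)]
    refine Finset.sum_eq_zero fun t _ => ?_
    by_cases ht : g.δ s t = 0
    · rw [ht, zero_mul]
    · rw [ih t (hA s hs t ht), mul_zero]

theorem CanReach.nonempty {s : St} (hs : g.CanReach T s) : T.Nonempty := by
  by_contra hT
  exact not_canReach_of_closed (A := Set.univ) (fun t _ ht => hT ⟨t, ht⟩)
    (fun _ _ _ _ => trivial) trivial hs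

def Undecided (g : MChain St) (T : Set St) (s : St) : Prop :=
  s ∉ T ∧ g.CanReach T s

theorem nonpos_of_harmonic (hg : g.IsChain) {v : St → ℝ}
    (hv : ∀ s, v s ≠ 0 → g.Undecided T s ∧ v s = ∑ t, g.δ s t * v t) (s : St) : v s ≤ 0 := by
  have : Nonempty St := ⟨s⟩
  obtain ⟨s₀, hmax⟩ := Finite.exists_max v
  by_contra! hpos
  have hM : v s₀ ≠ 0 := (hpos.trans_le (hmax s)).ne'
  refine not_canReach_of_closed (A := {t | v t = v s₀}) (fun t ht => ?_) (fun t ht u hu => ?_)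
    rfl (hv s₀ hM).1.2
  · exact (hv t (ht.trans_ne hM)).1.1
  · exact eq_of_sum_mul_eq_of_le (hg.1 t) (hg.2 t) hmax
      ((hv t (ht.trans_ne hM)).2.symm.trans ht) hu

theorem eq_zero_of_harmonic (hg : g.IsChain) {v : St → ℝ}
    (hv : ∀ s, v s ≠ 0 → g.Undecided T s ∧ v s = ∑ t, g.δ s t * v t) : v = 0 := by
  have hv' : ∀ s, (-v) s ≠ 0 → g.Undecided T s ∧ (-v) s = ∑ t, g.δ s t * (-v) t := by
    intro s hs
    obtain ⟨hU, heq⟩ := hv s (neg_ne_zero.mp hs)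
    exact ⟨hU, by simp [heq, Finset.sum_neg_distrib]⟩
  funext s
  exact le_antisymm (nonpos_of_harmonic hg hv s) (neg_nonpos.mp (nonpos_of_harmonic hg hv' s))

open Matrix

/-- Twice the reachability equations `x s = ∑ t, δ s t * x t` at the undecided states, with the
mass sent into `T` moved to the right-hand side, completed by `x s = 0` at the other states. The
doubling makes it integral for binary chains; the trivial rows have ℓ¹-norm `1`, so they do not
enter the determinant bound. -/
noncomputable def reachMatrix (g : MChain St) (T : Set St) : Matrix St St ℝ :=
  Matrix.of fun s t => if g.Undecided T s then
    2 * ((1 : Matrix St St ℝ) s t - Tᶜ.indicator (g.δ s) t) else (1 : Matrix St St ℝ) s t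

noncomputable def reachRhs (g : MChain St) (T : Set St) (s : St) : ℝ :=
  if g.Undecided T s then 2 * ∑ t, T.indicator (g.δ s) t else 0

theorem reachMatrix_mulVec (v : St → ℝ) (s : St) :
    (g.reachMatrix T *ᵥ v) s =
      if g.Undecided T s then 2 * (v s - ∑ t, Tᶜ.indicator (g.δ s) t * v t) else v s := by
  simp only [Matrix.mulVec, dotProduct, reachMatrix, Matrix.of_apply]
  split_ifs
  · simp [Matrix.one_apply, mul_sub, sub_mul, Finset.sum_sub_distrib, Finset.mul_sum, mul_assoc]
  · simp [Matrix.one_apply]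

theorem reachMatrix_mulVec_prReach (hg : g.IsChain) :
    g.reachMatrix T *ᵥ Tᶜ.indicator (g.prReach T) = g.reachRhs T := by
  funext s
  rw [reachMatrix_mulVec, reachRhs]
  split_ifs with hs
  · have hsplit : ∀ t, g.δ s t * g.prReach T t =
        T.indicator (g.δ s) t + Tᶜ.indicator (g.δ s) t * Tᶜ.indicator (g.prReach T) t := by
      intro t
      by_cases ht : t ∈ T <;> simp [ht, prReach_of_mem]
    rw [Set.indicator_of_mem (show s ∈ Tᶜ from hs.1), prReach_eq_sum hg hs.1,
      Finset.sum_congr rfl fun t _ => hsplit t, Finset.sum_add_distrib]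
    ring
  · by_cases hsT : s ∈ T
    · exact Set.indicator_of_notMem (not_not_intro hsT) _
    · rw [Set.indicator_of_mem (show s ∈ Tᶜ from hsT)]
      exact prReach_eq_zero_of_not_canReach hg fun h => hs ⟨hsT, h⟩

theorem det_reachMatrix_ne_zero (hg : g.IsChain) : (g.reachMatrix T).det ≠ 0 := by
  intro h
  obtain ⟨v, hv0, hv⟩ := Matrix.exists_mulVec_eq_zero_iff.mpr h
  have hrow := fun s => congrFun hv s
  simp only [reachMatrix_mulVec, Pi.zero_apply] at hrow
  have hdecided : ∀ s, ¬ g.Undecided T s → v s = 0 := fun s hs => by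
    simpa [hs] using hrow s
  refine hv0 (eq_zero_of_harmonic (T := T) hg fun s hs => ?_)
  have hU : g.Undecided T s := by_contra fun hU => hs (hdecided s hU)
  refine ⟨hU, ?_⟩
  have hcompl : ∀ t, Tᶜ.indicator (g.δ s) t * v t = g.δ s t * v t := fun t => by
    by_cases ht : t ∈ T
    · simp [ht, hdecided t fun h => h.1 ht]
    · simp [ht]
  have := hrow s
  simp only [hU, if_true, hcompl] at this
  linarith

theorem reachMatrix_intCast (hg : g.IsChain) (hbin : g.Binary) (s t : St) :
    ∃ z : ℤ, g.reachMatrix T s t = z := by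
  obtain ⟨z, hz⟩ := Binary.exists_intCast_two_mul_delta hg hbin s t
  simp only [reachMatrix, Matrix.of_apply, Matrix.one_apply, Set.indicator]
  split_ifs
  · exact ⟨2 - z, by push_cast; linarith⟩
  · exact ⟨2, by norm_num⟩
  · exact ⟨-z, by push_cast; linarith⟩
  · exact ⟨0, by norm_num⟩
  · exact ⟨1, by norm_num⟩
  · exact ⟨0, by norm_num⟩

theorem reachRhs_intCast (hg : g.IsChain) (hbin : g.Binary) (s : St) :
    ∃ z : ℤ, g.reachRhs T s = z := by
  choose z hz using Binary.exists_intCast_two_mul_delta hg hbin s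
  refine ⟨if g.Undecided T s then ∑ t ∈ {t | t ∈ T}, z t else 0, ?_⟩
  rw [reachRhs]
  split_ifs
  · push_cast
    rw [Finset.mul_sum, Finset.sum_filter]
    refine Finset.sum_congr rfl fun t _ => ?_
    by_cases ht : t ∈ T <;> simp [ht, hz]
  · simp

theorem abs_reachRhs_add_sum_abs_le (hg : g.IsChain) (s : St) :
    |g.reachRhs T s| + ∑ t, |g.reachMatrix T s t| ≤
      ((if g.Undecided T s then 4 else 1 : ℕ) : ℝ) := by
  simp only [reachRhs, reachMatrix, Matrix.of_apply]
  split_ifs with hs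
  · have hind : ∀ (A : Set St) t, 0 ≤ A.indicator (g.δ s) t := fun A t =>
      Set.indicator_nonneg (fun t _ => hg.1 s t) t
    have hentry : ∀ t, |2 * ((1 : Matrix St St ℝ) s t - Tᶜ.indicator (g.δ s) t)| ≤
        2 * (1 : Matrix St St ℝ) s t + 2 * Tᶜ.indicator (g.δ s) t := fun t => by
      have hone : 0 ≤ (1 : Matrix St St ℝ) s t := by
        rw [Matrix.one_apply]; split_ifs <;> norm_num
      rw [abs_mul, abs_two, ← mul_add]
      refine mul_le_mul_of_nonneg_left ((abs_sub _ _).trans ?_) zero_le_two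
      rw [abs_of_nonneg hone, abs_of_nonneg (hind _ t)]
    have hmass : ∑ t, T.indicator (g.δ s) t + ∑ t, Tᶜ.indicator (g.δ s) t = 1 := by
      rw [← Finset.sum_add_distrib]
      simp only [Set.indicator_self_add_compl_apply]
      exact hg.2 s
    have hdiag : ∑ t, (1 : Matrix St St ℝ) s t = 1 := by simp [Matrix.one_apply]
    calc |2 * ∑ t, T.indicator (g.δ s) t| +
          ∑ t, |2 * ((1 : Matrix St St ℝ) s t - Tᶜ.indicator (g.δ s) t)|
        ≤ 2 * ∑ t, T.indicator (g.δ s) t +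
            ∑ t, (2 * (1 : Matrix St St ℝ) s t + 2 * Tᶜ.indicator (g.δ s) t) :=
          add_le_add
            (abs_of_nonneg (mul_nonneg zero_le_two (Finset.sum_nonneg fun t _ => hind T t))).le
            (Finset.sum_le_sum fun t _ => hentry t)
      _ = ((4 : ℕ) : ℝ) := by
          rw [Finset.sum_add_distrib, ← Finset.mul_sum, ← Finset.mul_sum, hdiag]
          push_cast
          linarith
  · simp [Matrix.one_apply, apply_ite (abs : ℝ → ℝ)]

theorem prod_ite_undecided_le (hT : T.Nonempty) :
    ∏ s, (if g.Undecided T s then 4 else 1 : ℕ) ≤ 4 ^ (Fintype.card St - 1) := by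
  rw [Finset.prod_ite, Finset.prod_const, Finset.prod_const_one, mul_one]
  obtain ⟨t, ht⟩ := hT
  refine Nat.pow_le_pow_right (by norm_num) (Nat.le_sub_one_of_lt ?_)
  rw [← Finset.card_univ]
  exact Finset.card_lt_card
    (Finset.filter_ssubset.mpr ⟨t, Finset.mem_univ t, fun h : g.Undecided T t => h.1 ht⟩)

end MChain

theorem binary_markov_chain_value_rational_general
    {St : Type} [Fintype St]
    (g : MChain St) (hg : g.IsChain) (hbin : g.Binary) (T : Set St) :
    ∀ s : St, ∃ p q : ℕ, 0 < q ∧ p ≤ 4 ^ (Fintype.card St - 1) ∧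
      q ≤ 4 ^ (Fintype.card St - 1) ∧ MChain.prReach g T s = (p : ℝ) / (q : ℝ) := by
  intro s
  have hone : 1 ≤ 4 ^ (Fintype.card St - 1) := Nat.one_le_pow _ _ (by norm_num)
  by_cases hsT : s ∈ T
  · exact ⟨1, 1, one_pos, hone, hone, by simp [MChain.prReach_of_mem hsT]⟩
  by_cases hs : g.CanReach T s
  swap
  · exact ⟨0, 1, one_pos, Nat.zero_le _, hone,
      by simp [MChain.prReach_eq_zero_of_not_canReach hg hs]⟩
  obtain ⟨p, q, hq, hp_le, hq_le, hpq⟩ := Matrix.exists_nat_div_of_mulVec_eq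
    (MChain.reachMatrix_intCast hg hbin) (MChain.reachRhs_intCast hg hbin)
    (MChain.det_reachMatrix_ne_zero hg) (MChain.reachMatrix_mulVec_prReach hg)
    (MChain.abs_reachRhs_add_sum_abs_le hg) (k := s)
    (Set.indicator_nonneg (fun t _ => MChain.prReach_nonneg hg t) s)
  have hprod := MChain.prod_ite_undecided_le (g := g) hs.nonempty
  refine ⟨p, q, hq, hp_le.trans hprod, hq_le.trans hprod, ?_⟩
  rwa [Set.indicator_of_mem (show s ∈ Tᶜ from hsT)] at hpq

/-- **Values of binary Markov chains are small-denominator rationals.**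
Let `g` be a binary Markov chain on a finite state set with reachability objective
`Reach T`. Then for every state `s`, the probability of reaching `T` from `s`
equals `p/q` for some natural numbers `p, q ≤ 4^{|S|−1}` (with `q > 0`). -/
theorem binary_markov_chain_value_rational
    {St : Type} [Fintype St] [DecidableEq St]
    (g : MChain St) (hg : g.IsChain) (hbin : g.Binary) (T : Set St) :
    ∀ s : St, ∃ p q : ℕ, 0 < q ∧ p ≤ 4 ^ (Fintype.card St - 1) ∧
      q ≤ 4 ^ (Fintype.card St - 1) ∧ MChain.prReach g T s = (p : ℝ) / (q : ℝ) :=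
  binary_markov_chain_value_rational_general g hg hbin T
end
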